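/- Let M_red and M_blue be disjoint connected matchings (red and blue respectively) in a 2-coloured 3-uniform hypergraph K on t vertices that together maximize the number of covered vertices, and let δ ∈ (0, 1/20). Suppose u ∈ V_blue and v, w ∈ V_red with uvw ∈ M_blue, where V_blue and V_red are vertex sets such that: every vertex of V_blue has ≥ (1-δ)t shadow-neighbours in the blue component B ⊇ M_blue, every vertex of V_red has ≥ (1-δ)t shadow-neighbours in the red component R ⊇ M_red, all pairs among covered/uncovered vertices appearing are active with codegree ≥ (1-δ)t, and the set V'_red of uncovered vertices in V_red has size ≥ 8δt. Then a contradiction follows; hence no edge of M_blue has exactly one vertex in V_blue. -/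

import Mathlib

open Finset
open scoped Classical

/-- Pseudo-path connectivity of edges inside `G`. -/
def PseudoConn {V : Type*} [DecidableEq V] (G : Finset (Finset V))
    (e f : Finset V) : Prop :=
  ∃ p : List (Finset V), p ≠ [] ∧ p.head? = some e ∧ p.getLast? = some f ∧
    (∀ g ∈ p, g ∈ G) ∧ p.Chain' (fun a b => (a ∩ b).card = 2)

/-- `C` is a connected component of `G`. -/
def IsComponent {V : Type*} [DecidableEq V] (G C : Finset (Finset V)) : Prop :=
  ∃ e ∈ G, C = G.filter (fun f => PseudoConn G e f)

/-- A matching: pairwise disjoint edges. -/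
def IsMatching {V : Type*} [DecidableEq V] (M : Finset (Finset V)) : Prop :=
  ∀ e ∈ M, ∀ f ∈ M, e ≠ f → Disjoint e f

/-- Shadow neighbourhood `N_C(x)`. -/
noncomputable def shadowNbhd {V : Type*} [Fintype V] [DecidableEq V]
    (C : Finset (Finset V)) (x : V) : Finset V :=
  Finset.univ.filter (fun y => y ≠ x ∧ ∃ e ∈ C, x ∈ e ∧ y ∈ e)

/-- Codegree set `N_K(x,y)`. -/
noncomputable def codegSet {V : Type*} [Fintype V] [DecidableEq V]
    (K : Finset (Finset V)) (x y : V) : Finset V :=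
  Finset.univ.filter (fun z => ({x, y, z} : Finset V) ∈ K)


/-!
Take `uvw ∈ M_blue` with `u ∈ V_blue` and `v, w ∈ V_red`. All the relevant neighbourhoods have
size at least `(1 - δ)t` while `V'_red` has size at least `8δt`, and `δt ≥ 1`, so one can pick
uncovered `a ∈ N_B(u)`, then `b ∈ N_K(u,a) ∩ N_R(a)` and `c ∈ N_K(v,w) ∩ N_R(v)`, all in `V'_red`
and `c ∉ {a, b}`. Both `uab` and `vwc` are good edges (`ab, vc ∈ ∂R`, `ua, vw ∈ ∂B`), hence lie
in `R ∪ B`, and exchanging `uvw` for them gives a larger pair of connected matchings.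
Here `δt ≥ 1` holds because `N_B(u)` misses `u`, which leaves room to avoid `a` and `b`.
-/

section Component

variable {V : Type*} [DecidableEq V] {G C : Finset (Finset V)}

lemma IsComponent.subset (hC : IsComponent G C) : C ⊆ G := by
  obtain ⟨_, _, rfl⟩ := hC
  exact filter_subset _ _

lemma IsComponent.mem_of_card_inter_eq_two {f g : Finset V} (hC : IsComponent G C)
    (hg : g ∈ C) (hf : f ∈ G) (hgf : (g ∩ f).card = 2) : f ∈ C := by
  obtain ⟨e₀, -, rfl⟩ := hC
  obtain ⟨-, p, hp, hhead, hlast, hpG, hchain⟩ := mem_filter.mp hg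
  refine mem_filter.mpr ⟨hf, p ++ [f], by simp, ?_, by simp, ?_, ?_⟩
  · rwa [List.head?_append, Option.or_of_isSome (by simp [hhead])]
  · simpa [or_imp, forall_and] using ⟨hpG, hf⟩
  · refine List.isChain_append.mpr ⟨hchain, List.isChain_singleton _, ?_⟩
    simp_all

end Component

lemma card_inter_eq_two {V : Type*} [DecidableEq V] {f g : Finset V} {x y : V}
    (hf : f.card = 3) (hg : g.card = 3) (hfg : f ≠ g) (hxy : x ≠ y)
    (hxf : x ∈ f) (hyf : y ∈ f) (hxg : x ∈ g) (hyg : y ∈ g) : (g ∩ f).card = 2 := by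
  have hlow : 2 ≤ (g ∩ f).card := by
    rw [← card_pair hxy]
    exact card_le_card (by simp [insert_subset_iff, *])
  have hne : (g ∩ f).card ≠ 3 := fun h3 ↦ hfg <|
    (eq_of_subset_of_card_le inter_subset_right (by omega)).symm.trans
      (eq_of_subset_of_card_le inter_subset_left (by omega))
  have := card_le_card (inter_subset_left (s₁ := g) (s₂ := f))
  omega

section Shadow

variable {V : Type*} [Fintype V] [DecidableEq V]

lemma ne_of_mem_shadowNbhd {C : Finset (Finset V)} {x y : V} (h : y ∈ shadowNbhd C x) :
    x ≠ y :=
  fun hxy ↦ (mem_filter.mp h).2.1 hxy.symm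

lemma mem_shadowNbhd_of_mem {C : Finset (Finset V)} {e : Finset V} {x y : V} (he : e ∈ C)
    (hx : x ∈ e) (hy : y ∈ e) (hxy : x ≠ y) : y ∈ shadowNbhd C x :=
  mem_filter.mpr ⟨mem_univ y, hxy.symm, e, he, hx, hy⟩

lemma one_le_mul_card_of_le_card_shadowNbhd {C : Finset (Finset V)} {x : V} {δ : ℝ}
    (h : (1 - δ) * Fintype.card V ≤ (shadowNbhd C x).card) : 1 ≤ δ * Fintype.card V := by
  have : ((shadowNbhd C x).card : ℝ) + 1 ≤ Fintype.card V := by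
    exact_mod_cast card_lt_univ_of_notMem (x := x) (by simp [shadowNbhd])
  linarith

lemma IsComponent.mem_of_mem_shadowNbhd {G C : Finset (Finset V)} {f : Finset V} {x y : V}
    (hC : IsComponent G C) (h3 : ∀ g ∈ G, g.card = 3) (hf : f ∈ G)
    (hx : x ∈ f) (hy : y ∈ f) (hxy : y ∈ shadowNbhd C x) : f ∈ C := by
  obtain ⟨-, g, hg, hxg, hyg⟩ := (mem_filter.mp hxy).2
  by_cases hfg : f = g
  · exact hfg ▸ hg
  · exact hC.mem_of_card_inter_eq_two hg hf
      (card_inter_eq_two (h3 f hf) (h3 g (hC.subset hg)) hfg (ne_of_mem_shadowNbhd hxy)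
        hx hy hxg hyg)

lemma mem_union_of_good {Kred Kblue R B : Finset (Finset V)} {f : Finset V} {x y x' y' : V}
    (hR : IsComponent Kred R) (hB : IsComponent Kblue B)
    (h3 : ∀ g ∈ Kred ∪ Kblue, g.card = 3) (hf : f ∈ Kred ∪ Kblue)
    (hx : x ∈ f) (hy : y ∈ f) (hxy : y ∈ shadowNbhd R x)
    (hx' : x' ∈ f) (hy' : y' ∈ f) (hxy' : y' ∈ shadowNbhd B x') : f ∈ R ∪ B := by
  rcases mem_union.mp hf with hred | hblue
  · exact mem_union_left _ <| hR.mem_of_mem_shadowNbhd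
      (fun g hg ↦ h3 g (mem_union_left _ hg)) hred hx hy hxy
  · exact mem_union_right _ <| hB.mem_of_mem_shadowNbhd
      (fun g hg ↦ h3 g (mem_union_right _ hg)) hblue hx' hy' hxy'

end Shadow

section Matching

variable {V : Type*} [DecidableEq V] {M : Finset (Finset V)} {e e₁ e₂ W : Finset V}

lemma IsMatching.mono {N : Finset (Finset V)} (hM : IsMatching M) (hNM : N ⊆ M) :
    IsMatching N :=
  fun f hf g hg ↦ hM f (hNM hf) g (hNM hg)

lemma IsMatching.insert_of_disjoint (hM : IsMatching M) (he : ∀ f ∈ M, Disjoint e f) :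
    IsMatching (insert e M) := by
  intro f hf g hg hfg
  rcases mem_insert.mp hf with hfe | hfM <;> rcases mem_insert.mp hg with hge | hgM
  · exact absurd (hfe.trans hge.symm) hfg
  · exact hfe ▸ he g hgM
  · exact hge ▸ (he f hfM).symm
  · exact hM f hfM g hgM hfg

lemma IsMatching.exchange (hM : IsMatching M) (he : e ∈ M) (h₁₂ : Disjoint e₁ e₂)
    (hcover : e₁ ∪ e₂ = e ∪ W) (hW : Disjoint W (M.biUnion id)) :
    IsMatching (insert e₁ (insert e₂ (M.erase e))) := by
  have hfree : ∀ f ∈ M.erase e, Disjoint (e₁ ∪ e₂) f := by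
    intro f hf
    obtain ⟨hfe, hfM⟩ := mem_erase.mp hf
    rw [hcover, disjoint_union_left]
    exact ⟨(hM e he f hfM (Ne.symm hfe)), hW.mono_right (subset_biUnion_of_mem id hfM)⟩
  refine ((hM.mono (erase_subset e M)).insert_of_disjoint fun f hf ↦ ?_).insert_of_disjoint
    fun f hf ↦ ?_
  · exact (hfree f hf).mono_left subset_union_right
  · rcases mem_insert.mp hf with rfl | hf
    exacts [h₁₂, (hfree f hf).mono_left subset_union_left]

lemma biUnion_exchange (he : e ∈ M) (hcover : e₁ ∪ e₂ = e ∪ W) :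
    (insert e₁ (insert e₂ (M.erase e))).biUnion id = W ∪ M.biUnion id := by
  conv_rhs => rw [← insert_erase he]
  simp only [biUnion_insert, id, ← union_assoc, hcover]
  rw [union_comm e W]

end Matching

lemma forall_of_subset_union {α : Type*} [DecidableEq α] {R B N : Finset α}
    {P : Finset α → Prop} (h : ∀ s t, s ⊆ R → t ⊆ B → P (s ∪ t)) (hN : N ⊆ R ∪ B) : P N := by
  have := h (N.filter (· ∈ R)) (N.filter (· ∉ R)) (fun x hx ↦ (mem_filter.mp hx).2)
    (fun x hx ↦ ((mem_union.mp (hN (mem_filter.mp hx).1)).resolve_left (mem_filter.mp hx).2))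
  rwa [filter_union_filter_not_eq] at this

lemma eq_empty_of_exchange {V : Type*} [DecidableEq V] {R B Mred Mblue : Finset (Finset V)}
    {e e₁ e₂ W : Finset V}
    (hmax : ∀ Mr' Mb' : Finset (Finset V), Mr' ⊆ R → Mb' ⊆ B →
      IsMatching (Mr' ∪ Mb') →
      ((Mr' ∪ Mb').biUnion id).card ≤ ((Mred ∪ Mblue).biUnion id).card)
    (hMred : Mred ⊆ R) (hMblue : Mblue ⊆ B) (hMatch : IsMatching (Mred ∪ Mblue))
    (he : e ∈ Mred ∪ Mblue) (he₁ : e₁ ∈ R ∪ B) (he₂ : e₂ ∈ R ∪ B) (h₁₂ : Disjoint e₁ e₂)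
    (hcover : e₁ ∪ e₂ = e ∪ W) (hW : Disjoint W ((Mred ∪ Mblue).biUnion id)) : W = ∅ := by
  set N := insert e₁ (insert e₂ ((Mred ∪ Mblue).erase e))
  have hNRB : N ⊆ R ∪ B :=
    insert_subset he₁ <| insert_subset he₂ <|
      (erase_subset _ _).trans (union_subset_union hMred hMblue)
  have hle : (N.biUnion id).card ≤ ((Mred ∪ Mblue).biUnion id).card :=
    forall_of_subset_union
      (P := fun N ↦ IsMatching N → (N.biUnion id).card ≤ ((Mred ∪ Mblue).biUnion id).card)
      hmax hNRB
      (hMatch.exchange he h₁₂ hcover hW)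
  rw [biUnion_exchange he hcover, card_union_of_disjoint hW] at hle
  exact card_eq_zero.mp (by omega)

lemma exists_eq_triple_of_card_filter {V : Type*} [DecidableEq V] {S T e : Finset V}
    (hST : Disjoint S T) (he : e.card = 3) (hT : (e.filter (· ∈ T)).card = 1)
    (hS : (e.filter (· ∈ S)).card = 2) :
    ∃ u ∈ T, ∃ v ∈ S, ∃ w ∈ S, v ≠ w ∧ e = {u, v, w} := by
  obtain ⟨u, hu⟩ := card_eq_one.mp hT
  obtain ⟨v, w, hvw, hvw'⟩ := card_eq_two.mp hS
  have hdisj : Disjoint (e.filter (· ∈ T)) (e.filter (· ∈ S)) :=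
    disjoint_left.mpr fun _ hxT hxS ↦
      disjoint_left.mp hST (mem_filter.mp hxS).2 (mem_filter.mp hxT).2
  have hcover : e.filter (· ∈ T) ∪ e.filter (· ∈ S) = e :=
    eq_of_subset_of_card_le (union_subset (filter_subset _ _) (filter_subset _ _))
      (by rw [card_union_of_disjoint hdisj]; omega)
  refine ⟨u, ?_, v, ?_, w, ?_, hvw, ?_⟩
  · simpa using (mem_filter.mp (hu ▸ mem_singleton_self u : u ∈ e.filter (· ∈ T))).2
  · exact (mem_filter.mp (hvw' ▸ mem_insert_self v {w} : v ∈ e.filter (· ∈ S))).2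
  · exact (mem_filter.mp (hvw' ▸ by simp : w ∈ e.filter (· ∈ S))).2
  · rw [← hcover, hu, hvw']
    rfl

lemma exists_mem_of_dense {V : Type*} [Fintype V] [DecidableEq V] {A B S X : Finset V} {δ : ℝ}
    (hδ : 1 ≤ δ * Fintype.card V) (hA : (1 - δ) * Fintype.card V ≤ A.card)
    (hB : (1 - δ) * Fintype.card V ≤ B.card) (hS : 8 * δ * Fintype.card V ≤ S.card)
    (hX : X.card ≤ 2) : ∃ z ∈ S, z ∈ A ∧ z ∈ B ∧ z ∉ X := by
  have hinter (P Q : Finset V) : (P.card + Q.card : ℝ) ≤ (P ∩ Q).card + Fintype.card V := by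
    have := card_union_add_card_inter P Q
    have := card_le_univ (P ∪ Q)
    exact_mod_cast (by omega : P.card + Q.card ≤ (P ∩ Q).card + Fintype.card V)
  have hsdiff : ((A ∩ B ∩ S).card : ℝ) ≤ ((A ∩ B ∩ S) \ X).card + 2 := by
    have := le_card_sdiff X (A ∩ B ∩ S)
    exact_mod_cast (by omega : (A ∩ B ∩ S).card ≤ ((A ∩ B ∩ S) \ X).card + 2)
  have hpos : (0 : ℝ) < ((A ∩ B ∩ S) \ X).card := by
    linarith [hinter A B, hinter (A ∩ B) S]
  obtain ⟨z, hz⟩ := card_pos.mp (by exact_mod_cast hpos)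
  simp only [mem_sdiff, mem_inter] at hz
  exact ⟨z, hz.1.2, hz.1.1.1, hz.1.1.2, hz.2⟩

theorem no_blue_edge_with_one_Vblue_vertex_general {V : Type*} [Fintype V] [DecidableEq V]
    (δ : ℝ)
    (t : ℕ) (ht : t = Fintype.card V)
    (K Kred Kblue : Finset (Finset V))
    (h3 : ∀ e ∈ K, e.card = 3)
    (hunion : Kred ∪ Kblue = K)
    (R B : Finset (Finset V))
    (hR : IsComponent Kred R) (hB : IsComponent Kblue B)
    (Mred Mblue : Finset (Finset V))
    (hMred : Mred ⊆ R) (hMblue : Mblue ⊆ B)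
    (hMatch : IsMatching (Mred ∪ Mblue))
    (hmax : ∀ Mr' Mb' : Finset (Finset V), Mr' ⊆ R → Mb' ⊆ B →
      IsMatching (Mr' ∪ Mb') →
      ((Mr' ∪ Mb').biUnion id).card ≤ ((Mred ∪ Mblue).biUnion id).card)
    (Vred Vblue : Finset V) (hVdisj : Disjoint Vred Vblue)
    (hVblue : ∀ x ∈ Vblue, ((shadowNbhd B x).card : ℝ) ≥ (1 - δ) * t)
    (hVred : ∀ x ∈ Vred, ((shadowNbhd R x).card : ℝ) ≥ (1 - δ) * t)
    (hactive : ∀ x y : V, x ≠ y → (codegSet K x y).Nonempty)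
    (hcodeg : ∀ x y : V, x ≠ y → (codegSet K x y).Nonempty →
      ((codegSet K x y).card : ℝ) ≥ (1 - δ) * t)
    (hVred' : (((Vred.filter (fun x => x ∉ (Mred ∪ Mblue).biUnion id)).card : ℝ)
      ≥ 8 * δ * t)) :
    ∀ e ∈ Mblue, ¬ ((e.filter (fun v => v ∈ Vblue)).card = 1 ∧
      (e.filter (fun v => v ∈ Vred)).card = 2) := by
  subst ht hunion
  rintro e he ⟨hblue, hred⟩
  have heB := hMblue he
  obtain ⟨u, hu, v, hv, w, hw, hvw, rfl⟩ := exists_eq_triple_of_card_filter hVdisj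
    (h3 _ (mem_union_right _ (hB.subset heB))) hblue hred
  set U := (Mred ∪ Mblue).biUnion id
  have hδ := one_le_mul_card_of_le_card_shadowNbhd (hVblue u hu)
  have hcodeg' x y (hxy : x ≠ y) := hcodeg x y hxy (hactive x y hxy)
  obtain ⟨a, ha, hua, -, -⟩ := exists_mem_of_dense (B := univ) (X := ∅) hδ (hVblue u hu)
    (by rw [card_univ]; linarith) hVred' (by simp)
  obtain ⟨b, hb, hbK, hab, -⟩ := exists_mem_of_dense (X := ∅) hδ
    (hcodeg' u a (ne_of_mem_shadowNbhd hua))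
    (hVred a (mem_filter.mp ha).1) hVred' (by simp)
  obtain ⟨c, hc, hcK, hvc, hcab⟩ := exists_mem_of_dense hδ (hcodeg' v w hvw)
    (hVred v hv) hVred' (card_le_two (a := a) (b := b))
  have haU := (mem_filter.mp ha).2
  have hbU := (mem_filter.mp hb).2
  have hcU := (mem_filter.mp hc).2
  have hdisj : Disjoint ({u, a, b} : Finset V) {v, w, c} := by
    have hcov : ∀ x ∈ ({u, v, w} : Finset V), x ∈ U :=
      fun x hx ↦ mem_biUnion.mpr ⟨_, mem_union_right _ he, hx⟩
    have := hcov u (by simp)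
    have := hcov v (by simp)
    have := hcov w (by simp)
    have := disjoint_right.mp hVdisj hu
    simp only [disjoint_left, mem_insert, mem_singleton] at hcab ⊢
    grind
  have hwv : w ∈ shadowNbhd B v := mem_shadowNbhd_of_mem heB (by simp) (by simp) hvw
  have huab : {u, a, b} ∈ R ∪ B := mem_union_of_good hR hB h3 (mem_filter.mp hbK).2
    (by simp) (by simp) hab (by simp) (by simp) hua
  have hvwc : {v, w, c} ∈ R ∪ B := mem_union_of_good hR hB h3 (mem_filter.mp hcK).2
    (by simp) (by simp) hvc (by simp) (by simp) hwv
  refine insert_ne_empty a {b, c} <| eq_empty_of_exchange hmax hMred hMblue hMatch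
    (mem_union_right _ he) huab hvwc hdisj (by grind) ?_
  simpa only [disjoint_insert_left, disjoint_singleton_left] using ⟨haU, hbU, hcU⟩

/-- In the maximal pair `(M_red, M_blue)` of disjoint red/blue connected
matchings (in a red component `R` and a blue component `B` of a 2-coloured 3-uniform
hypergraph `K` on `t` vertices, `0 < δ < 1/20`), with `V_blue` vertices having `(1-δ)t`
shadow-neighbours in `B`, `V_red` vertices having `(1-δ)t` shadow-neighbours in `R`,
every active pair of `K` of codegree at least `(1-δ)t`, every pair of vertices active,
and the set `V'_red` of uncovered vertices of `V_red` of size at least `8δt`, no edge of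
`M_blue` has exactly one vertex in `V_blue` (and its other two vertices in `V_red`). -/
theorem no_blue_edge_with_one_Vblue_vertex {V : Type*} [Fintype V] [DecidableEq V]
    (δ : ℝ) (hδ0 : 0 < δ) (hδ1 : δ < 1 / 20)
    (t : ℕ) (ht : t = Fintype.card V)
    (K Kred Kblue : Finset (Finset V))
    (h3 : ∀ e ∈ K, e.card = 3)
    (hunion : Kred ∪ Kblue = K) (hdisj : Disjoint Kred Kblue)
    (R B : Finset (Finset V))
    (hR : IsComponent Kred R) (hB : IsComponent Kblue B)
    (Mred Mblue : Finset (Finset V))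
    (hMred : Mred ⊆ R) (hMblue : Mblue ⊆ B)
    (hMatch : IsMatching (Mred ∪ Mblue))
    (hmax : ∀ Mr' Mb' : Finset (Finset V), Mr' ⊆ R → Mb' ⊆ B →
      IsMatching (Mr' ∪ Mb') →
      ((Mr' ∪ Mb').biUnion id).card ≤ ((Mred ∪ Mblue).biUnion id).card)
    (Vred Vblue : Finset V) (hVdisj : Disjoint Vred Vblue)
    (hVblue : ∀ x ∈ Vblue, ((shadowNbhd B x).card : ℝ) ≥ (1 - δ) * t)
    (hVred : ∀ x ∈ Vred, ((shadowNbhd R x).card : ℝ) ≥ (1 - δ) * t)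
    (hactive : ∀ x y : V, x ≠ y → (codegSet K x y).Nonempty)
    (hcodeg : ∀ x y : V, x ≠ y → (codegSet K x y).Nonempty →
      ((codegSet K x y).card : ℝ) ≥ (1 - δ) * t)
    (hVred' : (((Vred.filter (fun x => x ∉ (Mred ∪ Mblue).biUnion id)).card : ℝ)
      ≥ 8 * δ * t)) :
    ∀ e ∈ Mblue, ¬ ((e.filter (fun v => v ∈ Vblue)).card = 1 ∧
      (e.filter (fun v => v ∈ Vred)).card = 2) :=
  no_blue_edge_with_one_Vblue_vertex_general δ t ht K Kred Kblue h3 hunion R B hR hB Mred Mblue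
    hMred hMblue hMatch hmax Vred Vblue hVdisj hVblue hVred hactive hcodeg hVred'
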